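/- arXiv:1701.07089 — 6 statements merged into one kernel-verified Lean document; each statement's English description precedes it below -/
import Mathlib

section
/- A probability mass function can be recovered from its exponential generating function via the Laguerre inversion: p[m] = ∫_0^∞ e^{-s}·H̃(-s)·L_m(s) ds. -/
/-- The `n`-th Laguerre polynomial as a real function. -/
noncomputable def laguerre (n : ℕ) (x : ℝ) : ℝ :=
  ∑ k ∈ Finset.range (n + 1), (n.choose k : ℝ) * (-x) ^ k / (Nat.factorial k : ℝ)

/-- Exponential generating function of the scaled falling moments of a pmf `p`. -/
noncomputable def egf (p : ℕ → ℝ) (t : ℝ) : ℝ :=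
  ∑' m : ℕ, t ^ m / (Nat.factorial m : ℝ) * (∑' n : ℕ, (n.choose m : ℝ) * p n)

/-!
For `s ≥ 0`, expanding `egf p (-s)` and swapping the absolutely convergent double series gives
`egf p (-s) = ∑ₙ pₙ Lₙ(s)`. The Laguerre polynomials are orthonormal for the weight `e^{-s}` on
`(0, ∞)`: writing them in monomials and using `∫ e^{-s} sᵏ = k!`, orthonormality reduces to the
alternating binomial identities `∑ₖ (-1)ᵏ C(m,k) C(j+k,j) = (-1)ᵐ C(j,m)` and
`∑ⱼ (-1)ʲ C(n,j) C(j,m) = (-1)ⁿ δₙₘ`, each an `m`-th forward difference at `0`.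
By AM-GM and orthonormality `∫ e^{-s} |Lₙ Lₘ| ≤ 1`, so with `∑ pₙ < ∞` the series may be
integrated termwise, and orthonormality leaves `pₘ`.
-/

open Finset MeasureTheory Set
open scoped Nat fwdDiff

lemma sum_neg_one_pow_mul_choose_mul (f : ℕ → ℤ) (m : ℕ) :
    ∑ k ∈ range (m + 1), (-1) ^ k * m.choose k * f k = (-1) ^ m * (Δ_[1])^[m] f 0 := by
  rw [fwdDiff_iter_eq_sum_shift, mul_sum]
  refine sum_congr rfl fun k hk => ?_
  obtain ⟨d, rfl⟩ := Nat.exists_eq_add_of_le (mem_range_succ_iff.mp hk)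
  simp only [zero_add, smul_eq_mul, Nat.add_sub_cancel_left, pow_add]
  obtain h | h := neg_one_pow_eq_or ℤ d <;> simp [h, mul_assoc]

lemma sum_neg_one_pow_mul_choose_mul_choose (n m : ℕ) :
    ∑ j ∈ range (n + 1), (-1 : ℤ) ^ j * n.choose j * j.choose m
      = if n = m then (-1) ^ n else 0 := by
  rw [sum_neg_one_pow_mul_choose_mul (fun j => (j.choose m : ℤ)), fwdDiff_iter_choose_zero]
  split_ifs <;> simp

lemma add_choose_eq_sum_choose_mul_choose (j k : ℕ) :
    (j + k).choose j = ∑ i ∈ range (j + 1), j.choose i * k.choose i := by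
  rw [add_comm, Nat.add_choose_eq, Nat.sum_antidiagonal_eq_sum_range_succ_mk]
  refine sum_congr rfl fun i hi => ?_
  rw [Nat.choose_symm (mem_range_succ_iff.mp hi), mul_comm]

lemma fwdDiff_iter_add_choose_zero (j m : ℕ) :
    (Δ_[1])^[m] (fun k => ((j + k).choose j : ℤ)) 0 = j.choose m := by
  have hsplit : (fun k => ((j + k).choose j : ℤ))
      = ∑ i ∈ range (j + 1), (j.choose i : ℤ) • fun k => (k.choose i : ℤ) := by
    ext k
    simp [add_choose_eq_sum_choose_mul_choose]
  simp only [hsplit, fwdDiff_iter_finsetSum, fwdDiff_iter_const_smul, Finset.sum_apply,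
    Pi.smul_apply, fwdDiff_iter_choose_zero, smul_eq_mul, mul_ite, mul_one, mul_zero,
    sum_ite_eq, Finset.mem_range]
  split_ifs with h
  · rfl
  · rw [Nat.choose_eq_zero_of_lt (by omega), Nat.cast_zero]

lemma sum_neg_one_pow_mul_choose_mul_add_choose (j m : ℕ) :
    ∑ k ∈ range (m + 1), (-1 : ℤ) ^ k * m.choose k * (j + k).choose j
      = (-1) ^ m * j.choose m := by
  rw [← fwdDiff_iter_add_choose_zero]
  exact sum_neg_one_pow_mul_choose_mul (fun k => ((j + k).choose j : ℤ)) m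

lemma laguerre_eq_sum_monomial (n : ℕ) (x : ℝ) :
    laguerre n x = ∑ k ∈ range (n + 1), (-1) ^ k * n.choose k / k ! * x ^ k := by
  refine sum_congr rfl fun k _ => ?_
  rw [neg_pow]
  ring

lemma integrableOn_exp_neg_mul_pow (k : ℕ) :
    IntegrableOn (fun s => Real.exp (-s) * s ^ k) (Ioi 0) := by
  refine (Real.GammaIntegral_convergent (s := k + 1) (by positivity)).congr_fun
    (fun s _ => ?_) measurableSet_Ioi
  simp [Real.rpow_natCast]

lemma integral_exp_neg_mul_pow (k : ℕ) :
    ∫ s in Ioi 0, Real.exp (-s) * s ^ k = k ! := by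
  rw [← Real.Gamma_nat_eq_factorial, Real.Gamma_eq_integral (by positivity)]
  refine setIntegral_congr_fun measurableSet_Ioi fun s _ => ?_
  simp [Real.rpow_natCast]

lemma exp_neg_mul_pow_mul_laguerre (j m : ℕ) (s : ℝ) :
    Real.exp (-s) * s ^ j * laguerre m s
      = ∑ k ∈ range (m + 1), (-1) ^ k * m.choose k / k ! * (Real.exp (-s) * s ^ (j + k)) := by
  rw [laguerre_eq_sum_monomial, mul_sum]
  refine sum_congr rfl fun k _ => ?_
  ring

lemma integrableOn_exp_neg_mul_pow_mul_laguerre (j m : ℕ) :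
    IntegrableOn (fun s => Real.exp (-s) * s ^ j * laguerre m s) (Ioi 0) := by
  simp_rw [exp_neg_mul_pow_mul_laguerre]
  exact integrable_finsetSum _ fun k _ => (integrableOn_exp_neg_mul_pow _).const_mul _

lemma integral_exp_neg_mul_pow_mul_laguerre (j m : ℕ) :
    ∫ s in Ioi 0, Real.exp (-s) * s ^ j * laguerre m s = (-1) ^ m * j ! * j.choose m := by
  simp_rw [exp_neg_mul_pow_mul_laguerre]
  rw [integral_finsetSum _ fun k _ => (integrableOn_exp_neg_mul_pow _).const_mul _]
  have hterm : ∀ k ∈ range (m + 1),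
      ∫ s in Ioi 0, (-1) ^ k * m.choose k / k ! * (Real.exp (-s) * s ^ (j + k))
        = j ! * ((-1) ^ k * m.choose k * (j + k).choose j) := fun k _ => by
    rw [integral_const_mul, integral_exp_neg_mul_pow,
      ← Nat.add_choose_mul_factorial_mul_factorial, ← Nat.choose_symm_add]
    push_cast
    field_simp
  rw [sum_congr rfl hterm, ← mul_sum]
  have h := congrArg (Int.cast : ℤ → ℝ) (sum_neg_one_pow_mul_choose_mul_add_choose j m)
  push_cast at h
  rw [h]
  ring

lemma exp_neg_mul_laguerre_mul_laguerre (n m : ℕ) (s : ℝ) :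
    Real.exp (-s) * laguerre n s * laguerre m s
      = ∑ j ∈ range (n + 1),
          (-1) ^ j * n.choose j / j ! * (Real.exp (-s) * s ^ j * laguerre m s) := by
  rw [laguerre_eq_sum_monomial n, mul_sum, sum_mul]
  refine sum_congr rfl fun j _ => ?_
  ring

lemma integrableOn_exp_neg_mul_laguerre_mul_laguerre (n m : ℕ) :
    IntegrableOn (fun s => Real.exp (-s) * laguerre n s * laguerre m s) (Ioi 0) := by
  simp_rw [exp_neg_mul_laguerre_mul_laguerre n m]
  exact integrable_finsetSum _ fun j _ =>
    (integrableOn_exp_neg_mul_pow_mul_laguerre _ _).const_mul _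

theorem integral_exp_neg_mul_laguerre_mul_laguerre (n m : ℕ) :
    ∫ s in Ioi 0, Real.exp (-s) * laguerre n s * laguerre m s = if n = m then 1 else 0 := by
  simp_rw [exp_neg_mul_laguerre_mul_laguerre n m]
  rw [integral_finsetSum _ fun j _ =>
    (integrableOn_exp_neg_mul_pow_mul_laguerre _ _).const_mul _]
  simp_rw [integral_const_mul, integral_exp_neg_mul_pow_mul_laguerre]
  have hterm : ∀ j ∈ range (n + 1), (-1) ^ j * n.choose j / j ! * ((-1) ^ m * j ! * j.choose m)
      = (-1 : ℝ) ^ m * ((-1) ^ j * n.choose j * j.choose m) := fun j _ => by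
    field_simp
  rw [sum_congr rfl hterm, ← mul_sum]
  have h := congrArg (Int.cast : ℤ → ℝ) (sum_neg_one_pow_mul_choose_mul_choose n m)
  push_cast at h
  rw [h]
  split_ifs with hnm
  · rw [hnm, ← mul_pow, neg_one_mul, neg_neg, one_pow]
  · rw [mul_zero]

lemma integral_abs_exp_neg_mul_laguerre_mul_laguerre_le_one (n m : ℕ) :
    ∫ s in Ioi 0, |Real.exp (-s) * laguerre n s * laguerre m s| ≤ 1 := by
  have hamgm : ∀ s : ℝ, |Real.exp (-s) * laguerre n s * laguerre m s|
      ≤ (Real.exp (-s) * laguerre n s * laguerre n s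
        + Real.exp (-s) * laguerre m s * laguerre m s) / 2 := fun s => by
    rw [abs_mul, abs_mul, abs_of_pos (Real.exp_pos _)]
    nlinarith [Real.exp_pos (-s), sq_nonneg (|laguerre n s| - |laguerre m s|),
      abs_mul_abs_self (laguerre n s), abs_mul_abs_self (laguerre m s)]
  have hn := integrableOn_exp_neg_mul_laguerre_mul_laguerre n n
  have hm := integrableOn_exp_neg_mul_laguerre_mul_laguerre m m
  calc ∫ s in Ioi 0, |Real.exp (-s) * laguerre n s * laguerre m s|
      ≤ ∫ s in Ioi 0, (Real.exp (-s) * laguerre n s * laguerre n s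
          + Real.exp (-s) * laguerre m s * laguerre m s) / 2 :=
        integral_mono (integrableOn_exp_neg_mul_laguerre_mul_laguerre n m).abs
          ((hn.add hm).div_const 2) hamgm
    _ = 1 := by
        rw [integral_div, integral_add hn hm, integral_exp_neg_mul_laguerre_mul_laguerre,
          integral_exp_neg_mul_laguerre_mul_laguerre]
        norm_num

lemma integral_tsum_mul_of_integral_abs_le_one {α : Type*} [MeasurableSpace α] {μ : Measure α}
    {c : ℕ → ℝ} (hc : Summable c) {g : ℕ → α → ℝ} (hg : ∀ n, Integrable (g n) μ)
    (hg1 : ∀ n, ∫ a, |g n a| ∂μ ≤ 1) :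
    ∫ a, ∑' n, c n * g n a ∂μ = ∑' n, c n * ∫ a, g n a ∂μ := by
  have hbound : ∀ n, ∫ a, ‖c n * g n a‖ ∂μ ≤ |c n| := fun n => by
    simp_rw [norm_mul, Real.norm_eq_abs, integral_const_mul]
    exact mul_le_of_le_one_right (abs_nonneg _) (hg1 n)
  simp_rw [← integral_const_mul]
  exact (integral_tsum_of_summable_integral_norm (fun n => (hg n).const_mul (c n))
    (hc.abs.of_nonneg_of_le (fun n => integral_nonneg fun _ => norm_nonneg _) hbound)).symm

lemma egf_eq_tsum_mul_laguerre {p : ℕ → ℝ} (hp0 : ∀ n, 0 ≤ p n)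
    (hconv : ∀ m, Summable fun n : ℕ => (n.choose m : ℝ) * p n) {t : ℝ}
    (ht : Summable fun m : ℕ => |t ^ m / m ! * ∑' n : ℕ, (n.choose m : ℝ) * p n|) :
    egf p t = ∑' n, p n * laguerre n (-t) := by
  set F : ℕ → ℕ → ℝ := fun k n => t ^ k / k ! * (n.choose k * p n)
  have habs : ∀ k n, |F k n| = |t ^ k / k !| * (n.choose k * p n) := fun k n => by
    rw [abs_mul, abs_of_nonneg (mul_nonneg (Nat.cast_nonneg _) (hp0 n))]
  have hF : Summable (Function.uncurry F) := by
    refine Summable.of_abs ((summable_prod_of_nonneg fun _ => abs_nonneg _).mpr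
      ⟨fun k => ?_, ?_⟩)
    · simp_rw [Function.uncurry, habs]
      exact (hconv k).mul_left _
    · simp_rw [Function.uncurry, habs, tsum_mul_left]
      refine ht.congr fun k => ?_
      rw [abs_mul, abs_of_nonneg (tsum_nonneg fun n => mul_nonneg (Nat.cast_nonneg _) (hp0 n))]
  have hcol : ∀ n, ∑' k, F k n = p n * laguerre n (-t) := fun n => by
    rw [tsum_eq_sum (s := range (n + 1)) fun k hk => by
      simp [F, Nat.choose_eq_zero_of_lt (not_lt.mp (mt mem_range.mpr hk))]]
    simp only [laguerre, neg_neg, mul_sum, F]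
    exact sum_congr rfl fun k _ => by ring
  calc egf p t = ∑' k, ∑' n, F k n := tsum_congr fun k => tsum_mul_left.symm
    _ = ∑' n, ∑' k, F k n := hF.tsum_comm.symm
    _ = ∑' n, p n * laguerre n (-t) := tsum_congr hcol

theorem laguerre_inversion_general (p : ℕ → ℝ)
    (hp0 : ∀ n, 0 ≤ p n)
    (hconv : ∀ m, Summable fun n : ℕ => (n.choose m : ℝ) * p n)
    (hconv2 : ∀ t : ℝ, t ≤ 0 → Summable fun m : ℕ =>
      |t ^ m / (Nat.factorial m : ℝ) * (∑' n : ℕ, (n.choose m : ℝ) * p n)|)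
    (m : ℕ) :
    p m = ∫ s in Set.Ioi (0 : ℝ), Real.exp (-s) * egf p (-s) * laguerre m s := by
  have hexpand : ∀ s ∈ Ioi (0 : ℝ), Real.exp (-s) * egf p (-s) * laguerre m s
      = ∑' n, p n * (Real.exp (-s) * laguerre n s * laguerre m s) := fun s hs => by
    rw [egf_eq_tsum_mul_laguerre hp0 hconv (hconv2 (-s) (by simpa using hs.le)), neg_neg,
      ← tsum_mul_left, ← tsum_mul_right]
    exact tsum_congr fun n => by ring
  rw [setIntegral_congr_fun measurableSet_Ioi hexpand,
    integral_tsum_mul_of_integral_abs_le_one (by simpa using hconv 0)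
      (fun n => integrableOn_exp_neg_mul_laguerre_mul_laguerre n m)
      (fun n => integral_abs_exp_neg_mul_laguerre_mul_laguerre_le_one n m)]
  simp [integral_exp_neg_mul_laguerre_mul_laguerre]

theorem laguerre_inversion (p : ℕ → ℝ)
    (hp0 : ∀ n, 0 ≤ p n) (hp1 : ∑' n, p n = 1)
    (hconv : ∀ m, Summable fun n : ℕ => (n.choose m : ℝ) * p n)
    (hconv2 : ∀ t : ℝ, t ≤ 0 → Summable fun m : ℕ =>
      |t ^ m / (Nat.factorial m : ℝ) * (∑' n : ℕ, (n.choose m : ℝ) * p n)|)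
    (m : ℕ) :
    p m = ∫ s in Set.Ioi (0 : ℝ), Real.exp (-s) * egf p (-s) * laguerre m s :=
  laguerre_inversion_general p hp0 hconv hconv2 m
end

section
/- For X on ℕ and its continuous counterpart X_c on ℂ defined by the density mixture p_{X_c}(r) = Σ_n p_X[n]·e^{-|r|²}|r|^{2n}/(n!π), the exponential generating functions satisfy H̃_X(t) = e^{-t}·φ̃_{X_c}(t), where φ̃_{X_c}(t) = Σ_m (t^m/m!)·(E|X_c|^{2m}/m!). -/
/-!
Both sides are mixtures over `n` of binomial series. Writing `E(X)_(m) / m! = ∑ₙ pₙ C(n, m)`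
and, from the Gaussian moments `∫_ℂ |r|^{2k} e^{-|r|²} dr = π k!`,
`E|X_c|^{2m} / m! = ∑ₙ pₙ C(n + m, m)`, the two sums over `m` and `n` may be interchanged,
because everything except `t^m` is nonnegative. It then suffices that
`∑ₘ C(n + m, m) t^m / m! = e^t ∑ₘ C(n, m) t^m / m!` for each `n`: this is the Cauchy product of
the exponential series with a polynomial, read through Vandermonde's identity
`C(n + m, m) = ∑_{i + j = m} C(m, i) C(n, j)`.
-/

/-- The `m`-th falling moment of a pmf `p` on ℕ. -/
noncomputable def fallingMoment (p : ℕ → ℝ) (m : ℕ) : ℝ :=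
  ∑' n : ℕ, p n * (Nat.descFactorial n m : ℝ)

/-- The density on ℂ of the continuous counterpart `X_c = T(X)` of a pmf `p` on ℕ. -/
noncomputable def contDensity (p : ℕ → ℝ) (r : ℂ) : ℝ :=
  ∑' n : ℕ, p n * (Real.exp (-(‖r‖ ^ 2)) * ‖r‖ ^ (2 * n) /
    ((Nat.factorial n : ℝ) * Real.pi))

/-- The `2m`-th absolute moment of the continuous counterpart. -/
noncomputable def contMoment (p : ℕ → ℝ) (m : ℕ) : ℝ :=
  ∫ r : ℂ, ‖r‖ ^ (2 * m) * contDensity p r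

open MeasureTheory Real Finset Nat

theorem fallingMoment_eq_factorial_mul_tsum (p : ℕ → ℝ) (m : ℕ) :
    fallingMoment p m = m ! * ∑' n, p n * n.choose m := by
  rw [fallingMoment, ← tsum_mul_left]
  refine tsum_congr fun n => ?_
  rw [Nat.descFactorial_eq_factorial_mul_choose]
  push_cast
  ring

theorem summable_mul_choose_of_descFactorial {p : ℕ → ℝ} {k : ℕ}
    (h : Summable fun n => p n * n.descFactorial k) : Summable fun n => p n * n.choose k :=
  (h.div_const (k ! : ℝ)).congr fun n => by
    rw [Nat.descFactorial_eq_factorial_mul_choose]; push_cast; field_simp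

theorem summable_mul_choose_add {p : ℕ → ℝ} (h : ∀ k, Summable fun n => p n * n.choose k)
    (m : ℕ) : Summable fun n => p n * (n + m).choose m := by
  simp_rw [Nat.add_choose_eq, Nat.cast_sum, mul_sum]
  refine summable_sum fun ij _ => ((h ij.1).mul_right (m.choose ij.2 : ℝ)).congr fun n => ?_
  push_cast; ring

theorem integral_norm_pow_mul_exp_neg_sq (k : ℕ) :
    ∫ r : ℂ, ‖r‖ ^ (2 * k) * rexp (-(‖r‖ ^ 2)) = π * k ! := by
  have h := Complex.integral_rpow_mul_exp_neg_rpow (p := 2) (q := (2 * k : ℕ)) one_le_two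
    ((neg_lt_zero.2 two_pos).trans_le (Nat.cast_nonneg _))
  simp only [Real.rpow_natCast, Real.rpow_two] at h
  rw [h, show (((2 * k : ℕ) : ℝ) + 2) / 2 = k + 1 by push_cast; ring, Real.Gamma_nat_eq_factorial]
  ring

theorem integrable_norm_pow_mul_exp_neg_sq (k : ℕ) :
    Integrable fun r : ℂ => ‖r‖ ^ (2 * k) * rexp (-(‖r‖ ^ 2)) :=
  Integrable.of_integral_ne_zero <| by
    rw [integral_norm_pow_mul_exp_neg_sq]; positivity

theorem contMoment_eq_factorial_mul_tsum {p : ℕ → ℝ} (hp : ∀ n, 0 ≤ p n) {m : ℕ}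
    (h : Summable fun n => p n * (n + m).choose m) :
    contMoment p m = m ! * ∑' n, p n * (n + m).choose m := by
  set F : ℕ → ℂ → ℝ := fun n r =>
    p n / (n ! * π) * (‖r‖ ^ (2 * (n + m)) * rexp (-(‖r‖ ^ 2))) with hF
  have hF_nonneg : ∀ n r, 0 ≤ F n r := fun n r => by have := hp n; positivity
  have hF_int : ∀ n, Integrable (F n) := fun n =>
    (integrable_norm_pow_mul_exp_neg_sq (n + m)).const_mul _
  have hF_integral : ∀ n, ∫ r, F n r = m ! * (p n * (n + m).choose m) := fun n => by
    rw [integral_const_mul, integral_norm_pow_mul_exp_neg_sq,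
      ← Nat.add_choose_mul_factorial_mul_factorial n m]
    have : (n ! : ℝ) ≠ 0 := by positivity
    push_cast
    field_simp
  have hF_sum : ∀ r, ‖r‖ ^ (2 * m) * contDensity p r = ∑' n, F n r := fun r => by
    rw [contDensity, ← tsum_mul_left]
    refine tsum_congr fun n => ?_
    simp only [hF, Nat.mul_add, pow_add]
    ring
  have hF_norm : Summable fun n => ∫ r, ‖F n r‖ := by
    simp_rw [Real.norm_of_nonneg (hF_nonneg _ _), hF_integral]
    exact h.mul_left _
  rw [contMoment, integral_congr_ae (.of_forall hF_sum),
    ← integral_tsum_of_summable_integral_norm hF_int hF_norm, tsum_congr hF_integral, tsum_mul_left]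

theorem choose_add_mul_pow_div_factorial (n m : ℕ) (t : ℝ) :
    t ^ m / m ! * (n + m).choose m =
      ∑ ij ∈ antidiagonal m, t ^ ij.1 / ij.1 ! * (t ^ ij.2 / ij.2 ! * n.choose ij.2) := by
  rw [add_comm, Nat.add_choose_eq, Nat.cast_sum, mul_sum]
  refine sum_congr rfl fun ⟨i, j⟩ hij => ?_
  rw [HasAntidiagonal.mem_antidiagonal] at hij
  subst hij
  dsimp only
  rw [Nat.choose_symm_add, ← Nat.add_choose_mul_factorial_mul_factorial i j]
  have : ((i + j).choose j : ℝ) ≠ 0 := by exact_mod_cast (Nat.choose_pos (by omega)).ne'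
  push_cast
  field_simp
  ring

theorem tsum_pow_div_factorial_mul_choose_add (n : ℕ) (t : ℝ) :
    ∑' m, t ^ m / m ! * (n + m).choose m = rexp t * ∑' m, t ^ m / m ! * n.choose m := by
  have hexp : Summable fun i => ‖t ^ i / (i ! : ℝ)‖ := by
    simpa [norm_div, norm_pow] using Real.summable_pow_div_factorial |t|
  have hpoly : Summable fun j => ‖t ^ j / (j ! : ℝ) * n.choose j‖ :=
    summable_of_ne_finset_zero (s := range (n + 1)) fun j hj => by
      simp [Nat.choose_eq_zero_of_lt (by simpa using hj)]
  rw [Real.exp_eq_exp_ℝ, ← (NormedSpace.expSeries_div_hasSum_exp t).tsum_eq,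
    tsum_mul_tsum_eq_tsum_sum_antidiagonal_of_summable_norm hexp hpoly]
  exact tsum_congr fun m => choose_add_mul_pow_div_factorial n m t

theorem tsum_mul_tsum_comm_of_nonneg {ι κ : Type*} {c : ι → ℝ} {f : ι → κ → ℝ}
    (hf : ∀ i k, 0 ≤ f i k) (hrow : ∀ i, Summable (f i))
    (hc : Summable fun i => c i * ∑' k, f i k) :
    ∑' i, c i * ∑' k, f i k = ∑' k, ∑' i, c i * f i k := by
  have habs : Summable fun q : ι × κ => |c q.1 * f q.1 q.2| := by
    refine (summable_prod_of_nonneg fun _ => abs_nonneg _).2 ⟨fun i => ?_, ?_⟩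
    · simpa [abs_mul, abs_of_nonneg (hf _ _)] using (hrow i).mul_left |c i|
    · refine hc.abs.congr fun i => ?_
      simp only [abs_mul, abs_of_nonneg (hf _ _), abs_of_nonneg (tsum_nonneg (hf i)), tsum_mul_left]
  simp_rw [← tsum_mul_left]
  exact habs.of_abs.tsum_comm.symm

theorem egf_relation_general (p : ℕ → ℝ)
    (hp0 : ∀ n, 0 ≤ p n)
    (hfm : ∀ m, Summable fun n : ℕ => p n * (Nat.descFactorial n m : ℝ))
    (t : ℝ)
    (hH : Summable fun m : ℕ =>
      t ^ m / (Nat.factorial m : ℝ) * (fallingMoment p m / (Nat.factorial m : ℝ)))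
    (hphi : Summable fun m : ℕ =>
      t ^ m / (Nat.factorial m : ℝ) * (contMoment p m / (Nat.factorial m : ℝ))) :
    (∑' m : ℕ, t ^ m / (Nat.factorial m : ℝ) * (fallingMoment p m / (Nat.factorial m : ℝ)))
      = Real.exp (-t) *
        ∑' m : ℕ, t ^ m / (Nat.factorial m : ℝ) * (contMoment p m / (Nat.factorial m : ℝ)) := by
  have hchoose : ∀ k, Summable fun n => p n * n.choose k := fun k =>
    summable_mul_choose_of_descFactorial (hfm k)
  have hfalling : ∀ m, fallingMoment p m / m ! = ∑' n, p n * n.choose m := fun m => by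
    rw [fallingMoment_eq_factorial_mul_tsum, mul_div_cancel_left₀ _ (by positivity)]
  have hcont : ∀ m, contMoment p m / m ! = ∑' n, p n * (n + m).choose m := fun m => by
    rw [contMoment_eq_factorial_mul_tsum hp0 (summable_mul_choose_add hchoose m),
      mul_div_cancel_left₀ _ (by positivity)]
  simp only [hfalling, hcont] at hH hphi ⊢
  rw [tsum_mul_tsum_comm_of_nonneg (fun _ n => by have := hp0 n; positivity) hchoose hH,
    tsum_mul_tsum_comm_of_nonneg (fun _ n => by have := hp0 n; positivity)
      (summable_mul_choose_add hchoose) hphi, ← tsum_mul_left]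
  refine tsum_congr fun n => ?_
  simp_rw [mul_left_comm _ (p n), tsum_mul_left, tsum_pow_div_factorial_mul_choose_add,
    Real.exp_neg]
  field_simp

theorem egf_relation (p : ℕ → ℝ)
    (hp0 : ∀ n, 0 ≤ p n) (hp1 : ∑' n, p n = 1)
    (hfm : ∀ m, Summable fun n : ℕ => p n * (Nat.descFactorial n m : ℝ))
    (t : ℝ) (ht : t ≤ 0)
    (hH : Summable fun m : ℕ =>
      t ^ m / (Nat.factorial m : ℝ) * (fallingMoment p m / (Nat.factorial m : ℝ)))
    (hphi : Summable fun m : ℕ =>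
      t ^ m / (Nat.factorial m : ℝ) * (contMoment p m / (Nat.factorial m : ℝ))) :
    (∑' m : ℕ, t ^ m / (Nat.factorial m : ℝ) * (fallingMoment p m / (Nat.factorial m : ℝ)))
      = Real.exp (-t) *
        ∑' m : ℕ, t ^ m / (Nat.factorial m : ℝ) * (contMoment p m / (Nat.factorial m : ℝ)) :=
  egf_relation_general p hp0 hfm t hH hphi
end

section
/- If X is geometric with mean λ, then its continuous counterpart X_c = T(X) has 2m-th absolute moments E|X_c|^{2m} = m!·(1+λ)^m, i.e., X_c is circularly symmetric Gaussian with total variance 1+λ. -/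
/-- pmf of a geometric random variable on ℕ with mean `λ`. -/
noncomputable def geomPmf (l : ℝ) (n : ℕ) : ℝ := (1 / (1 + l)) * (l / (1 + l)) ^ n

/-! Summing the geometric weights against the Poisson-type kernels `e^{-|r|²}|r|^{2n}/n!` is an
exponential series, so `X_c` is the circular Gaussian of variance `1 + λ`; its moments are then
Gamma integrals. -/

open Real MeasureTheory
open scoped Nat

noncomputable def circularGaussianPDF (s : ℝ) (r : ℂ) : ℝ := exp (-‖r‖ ^ 2 / s) / (π * s)

lemma Real.hasSum_pow_div_factorial (x : ℝ) : HasSum (fun n : ℕ ↦ x ^ n / n !) (exp x) := by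
  rw [Real.exp_eq_exp_ℝ]
  exact NormedSpace.expSeries_div_hasSum_exp x

lemma contDensity_geomPmf {l : ℝ} (hl : 1 + l ≠ 0) :
    contDensity (geomPmf l) = circularGaussianPDF (1 + l) := by
  ext r
  have hterm (n : ℕ) : geomPmf l n * (exp (-‖r‖ ^ 2) * ‖r‖ ^ (2 * n) / (n ! * π)) =
      exp (-‖r‖ ^ 2) / (π * (1 + l)) * ((l * ‖r‖ ^ 2 / (1 + l)) ^ n / n !) := by
    rw [geomPmf, pow_mul]
    field_simp
    ring
  have hexp : exp (-‖r‖ ^ 2) * exp (l * ‖r‖ ^ 2 / (1 + l)) = exp (-‖r‖ ^ 2 / (1 + l)) := by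
    rw [← exp_add]
    congr 1
    field_simp
    ring
  rw [contDensity, circularGaussianPDF, funext hterm,
    ((hasSum_pow_div_factorial _).mul_left _).tsum_eq, ← hexp]
  ring

lemma integral_norm_pow_mul_circularGaussianPDF {s : ℝ} (hs : 0 < s) (m : ℕ) :
    ∫ r : ℂ, ‖r‖ ^ (2 * m) * circularGaussianPDF s r = m ! * s ^ m := by
  have hintegrand (r : ℂ) : ‖r‖ ^ (2 * m) * circularGaussianPDF s r =
      (π * s)⁻¹ * (‖r‖ ^ ((2 * m : ℕ) : ℝ) * exp (-s⁻¹ * ‖r‖ ^ (2 : ℝ))) := by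
    rw [circularGaussianPDF, rpow_natCast, rpow_two]
    ring_nf
  have hGamma : Gamma ((((2 * m : ℕ) : ℝ) + 2) / 2) = m ! := by
    rw [← Gamma_nat_eq_factorial]
    congr 1
    push_cast
    ring
  have hpow : s⁻¹ ^ (-(((2 * m : ℕ) : ℝ) + 2) / 2) = s ^ (m + 1) := by
    rw [inv_rpow hs.le, ← rpow_neg hs.le, ← rpow_natCast]
    congr 1
    push_cast
    ring
  simp_rw [hintegrand]
  have hq : (-2 : ℝ) < (2 * m : ℕ) := by linarith [(2 * m).cast_nonneg (α := ℝ)]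
  rw [integral_const_mul,
    Complex.integral_rpow_mul_exp_neg_mul_rpow one_le_two hq (inv_pos.mpr hs), hGamma, hpow]
  field_simp
  ring

theorem geometric_continuous_moments (l : ℝ) (hl : 0 < l) (m : ℕ) :
    (∫ r : ℂ, ‖r‖ ^ (2 * m) * contDensity (geomPmf l) r)
      = (Nat.factorial m : ℝ) * (1 + l) ^ m := by
  have hl1 : 0 < 1 + l := by linarith
  rw [contDensity_geomPmf hl1.ne']
  exact integral_norm_pow_mul_circularGaussianPDF hl1 m
end

section
/- If X_c and Y_c are independent circularly symmetric complex random variables and Z_c = √η·X_c + √(1-η)·Y_c, then the exponential generating functions of scaled even moments satisfy φ̃_{Z_c}(t) = φ̃_{X_c}(ηt)·φ̃_{Y_c}((1-η)t), based on the moment convolution formula E|U+V|^{2m} = Σ_{n=0}^m binom(m,n)²·E|U|^{2n}·E|V|^{2(m-n)}. -/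
/-!
Write `|U + V| ^ (2m) = (U + V) ^ m * conj (U + V) ^ m` and expand both factors binomially.
By independence each term factors as `E[U ^ j * conj U ^ k] * E[V ^ (m - j) * conj V ^ (m - k)]`,
and circular symmetry of `U` kills every term with `j ≠ k`: rotating `U` by `e^{iθ}` with
`(j - k) θ = π` leaves the distribution unchanged but negates `U ^ j * conj U ^ k`. What remains
is `E|U + V| ^ (2m) = ∑ₙ (m choose n)² E|U| ^ (2n) E|V| ^ (2(m - n))`, and after division by
`m!²` the squared binomials turn this convolution into the Cauchy product of the two generating
functions, applied to `U = √η X` and `V = √(1 - η) Y`.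
-/

open MeasureTheory

/-- A complex random variable is circularly symmetric if its distribution is invariant
under multiplication by any unit complex number. -/
def CircSymm {Ω : Type*} [MeasurableSpace Ω] (μ : Measure Ω) (U : Ω → ℂ) : Prop :=
  ∀ θ : ℝ, Measure.map (fun ω => Complex.exp (θ * Complex.I) * U ω) μ = Measure.map U μ

/-- Exponential generating function of the scaled even absolute moments of a
complex random variable. -/
noncomputable def egfMoments {Ω : Type*} [MeasurableSpace Ω] (μ : Measure Ω)
    (W : Ω → ℂ) (t : ℝ) : ℝ :=
  ∑' m : ℕ, t ^ m / (Nat.factorial m : ℝ) *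
    ((∫ ω, ‖W ω‖ ^ (2 * m) ∂μ) / (Nat.factorial m : ℝ))

open ProbabilityTheory ComplexConjugate Finset
open scoped Nat

lemma ofReal_norm_pow_two_mul (z : ℂ) (m : ℕ) :
    ((‖z‖ ^ (2 * m) : ℝ) : ℂ) = z ^ m * conj z ^ m := by
  rw [← mul_pow, Complex.mul_conj', pow_mul]
  push_cast
  rfl

lemma add_pow_mul_conj_add_pow (u v : ℂ) (m : ℕ) :
    (u + v) ^ m * conj (u + v) ^ m
      = ∑ j ∈ range (m + 1), ∑ k ∈ range (m + 1), (m.choose j * m.choose k : ℂ) *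
          ((u ^ j * conj u ^ k) * (v ^ (m - j) * conj v ^ (m - k))) := by
  rw [map_add, add_pow, add_pow, sum_mul_sum]
  refine sum_congr rfl fun j _ => sum_congr rfl fun k _ => ?_
  ring

lemma continuous_pow_mul_conj_pow (j k : ℕ) : Continuous fun z : ℂ => z ^ j * conj z ^ k := by
  fun_prop

section Moments

variable {Ω : Type*} [MeasurableSpace Ω] {μ : Measure Ω}

lemma CircSymm.const_mul {U : Ω → ℂ} (hU : Measurable U) (hUc : CircSymm μ U) (c : ℂ) :
    CircSymm μ (fun ω => c * U ω) := by
  intro θ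
  have hrot : Measurable fun ω => Complex.exp (θ * Complex.I) * U ω := hU.const_mul _
  calc Measure.map (fun ω => Complex.exp (θ * Complex.I) * (c * U ω)) μ
      = Measure.map (c * ·) (Measure.map (fun ω => Complex.exp (θ * Complex.I) * U ω) μ) := by
        rw [Measure.map_map (measurable_const_mul c) hrot]
        congr 1
        funext ω
        exact mul_left_comm _ _ _
    _ = Measure.map (fun ω => c * U ω) μ := by
        rw [hUc θ, Measure.map_map (measurable_const_mul c) hU]
        rfl

lemma CircSymm.integral_comp_rotate {E : Type*} [NormedAddCommGroup E] [NormedSpace ℝ E]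
    {U : Ω → ℂ} (hU : Measurable U) (hUc : CircSymm μ U) {f : ℂ → E}
    (hf : AEStronglyMeasurable f (μ.map U)) (θ : ℝ) :
    ∫ ω, f (Complex.exp (θ * Complex.I) * U ω) ∂μ = ∫ ω, f (U ω) ∂μ := by
  rw [← integral_map (hU.const_mul _).aemeasurable (by rwa [hUc θ]), hUc θ,
    integral_map hU.aemeasurable hf]

lemma CircSymm.integral_pow_mul_conj_pow_eq_zero {U : Ω → ℂ} (hU : Measurable U)
    (hUc : CircSymm μ U) {j k : ℕ} (hjk : j ≠ k) :
    ∫ ω, U ω ^ j * conj (U ω) ^ k ∂μ = 0 := by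
  have hjk' : ((j : ℂ) - k) ≠ 0 := sub_ne_zero.2 (by exact_mod_cast hjk)
  set θ : ℝ := Real.pi / (j - k)
  set w := Complex.exp (θ * Complex.I)
  have hw : w ^ j * conj w ^ k = -1 := by
    rw [← Complex.exp_conj, ← Complex.exp_nat_mul, ← Complex.exp_nat_mul, ← Complex.exp_add,
      ← Complex.exp_pi_mul_I]
    congr 1
    simp only [θ, map_mul, Complex.conj_ofReal, Complex.conj_I]
    push_cast
    field_simp
    ring
  have hrot :
      ∫ ω, (w * U ω) ^ j * conj (w * U ω) ^ k ∂μ = ∫ ω, U ω ^ j * conj (U ω) ^ k ∂μ :=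
    hUc.integral_comp_rotate hU (continuous_pow_mul_conj_pow j k).aestronglyMeasurable θ
  have hneg : ∀ z : ℂ, (w * z) ^ j * conj (w * z) ^ k = -(z ^ j * conj z ^ k) := fun z => by
    rw [map_mul, mul_pow, mul_pow, ← neg_one_mul, ← hw]
    ring
  simp only [hneg, integral_neg] at hrot
  linear_combination (-1 / 2 : ℂ) * hrot

lemma integrable_pow_mul_conj_pow {U : Ω → ℂ} (hU : Measurable U)
    (hUm : ∀ k : ℕ, Integrable (fun ω => ‖U ω‖ ^ k) μ) (j k : ℕ) :
    Integrable (fun ω => U ω ^ j * conj (U ω) ^ k) μ := by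
  refine (hUm (j + k)).mono'
    ((continuous_pow_mul_conj_pow j k).measurable.comp hU).aestronglyMeasurable
    (Filter.Eventually.of_forall fun ω => ?_)
  simp [pow_add]

lemma integral_norm_const_mul_pow (c : ℂ) (U : Ω → ℂ) (k : ℕ) :
    ∫ ω, ‖c * U ω‖ ^ k ∂μ = ‖c‖ ^ k * ∫ ω, ‖U ω‖ ^ k ∂μ := by
  simp only [norm_mul, mul_pow, integral_const_mul]

lemma integrable_norm_const_mul_pow {U : Ω → ℂ} (c : ℂ) {k : ℕ}
    (hU : Integrable (fun ω => ‖U ω‖ ^ k) μ) :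
    Integrable (fun ω => ‖c * U ω‖ ^ k) μ := by
  simpa only [norm_mul, mul_pow] using hU.const_mul (‖c‖ ^ k)

theorem integral_norm_add_pow_two_mul {U V : Ω → ℂ} (hU : Measurable U) (hV : Measurable V)
    (hUV : IndepFun U V μ) (hUc : CircSymm μ U)
    (hUm : ∀ k : ℕ, Integrable (fun ω => ‖U ω‖ ^ k) μ)
    (hVm : ∀ k : ℕ, Integrable (fun ω => ‖V ω‖ ^ k) μ) (m : ℕ) :
    ∫ ω, ‖U ω + V ω‖ ^ (2 * m) ∂μ
      = ∑ n ∈ range (m + 1), (m.choose n : ℝ) ^ 2 *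
          ((∫ ω, ‖U ω‖ ^ (2 * n) ∂μ) * ∫ ω, ‖V ω‖ ^ (2 * (m - n)) ∂μ) := by
  have hmixed : ∀ j k p q : ℕ,
      ∫ ω, (U ω ^ j * conj (U ω) ^ k) * (V ω ^ p * conj (V ω) ^ q) ∂μ
        = (∫ ω, U ω ^ j * conj (U ω) ^ k ∂μ) * ∫ ω, V ω ^ p * conj (V ω) ^ q ∂μ :=
    fun j k p q => hUV.integral_fun_comp_mul_comp hU.aemeasurable hV.aemeasurable
      (continuous_pow_mul_conj_pow j k).aestronglyMeasurable
      (continuous_pow_mul_conj_pow p q).aestronglyMeasurable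
  have hint : ∀ j k p q : ℕ,
      Integrable (fun ω => (U ω ^ j * conj (U ω) ^ k) * (V ω ^ p * conj (V ω) ^ q)) μ :=
    fun j k p q => (hUV.comp (continuous_pow_mul_conj_pow j k).measurable
      (continuous_pow_mul_conj_pow p q).measurable).integrable_mul
      (integrable_pow_mul_conj_pow hU hUm j k) (integrable_pow_mul_conj_pow hV hVm p q)
  apply Complex.ofReal_injective
  calc ((∫ ω, ‖U ω + V ω‖ ^ (2 * m) ∂μ : ℝ) : ℂ)
      = ∫ ω, ∑ j ∈ range (m + 1), ∑ k ∈ range (m + 1), (m.choose j * m.choose k : ℂ) *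
          ((U ω ^ j * conj (U ω) ^ k) * (V ω ^ (m - j) * conj (V ω) ^ (m - k))) ∂μ := by
        simp_rw [← integral_complex_ofReal, ofReal_norm_pow_two_mul, add_pow_mul_conj_add_pow]
    _ = ∑ j ∈ range (m + 1), ∑ k ∈ range (m + 1), (m.choose j * m.choose k : ℂ) *
          ((∫ ω, U ω ^ j * conj (U ω) ^ k ∂μ) *
            ∫ ω, V ω ^ (m - j) * conj (V ω) ^ (m - k) ∂μ) := by
        rw [integral_finsetSum _ fun j _ => integrable_finsetSum _ fun k _ =>
          (hint _ _ _ _).const_mul _]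
        refine sum_congr rfl fun j _ => ?_
        rw [integral_finsetSum _ fun k _ => (hint _ _ _ _).const_mul _]
        simp_rw [integral_const_mul, hmixed]
    _ = ∑ j ∈ range (m + 1), (m.choose j : ℂ) ^ 2 *
          ((∫ ω, U ω ^ j * conj (U ω) ^ j ∂μ) *
            ∫ ω, V ω ^ (m - j) * conj (V ω) ^ (m - j) ∂μ) := by
        refine sum_congr rfl fun j hj => ?_
        rw [sum_eq_single_of_mem j hj fun k _ hkj => by
          rw [hUc.integral_pow_mul_conj_pow_eq_zero hU (Ne.symm hkj), zero_mul, mul_zero]]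
        ring
    _ = _ := by
        simp_rw [← ofReal_norm_pow_two_mul, integral_complex_ofReal]
        push_cast
        rfl

end Moments

lemma tsum_binomial_sq_convolution (a b : ℕ → ℝ) (x y t : ℝ)
    (ha : Summable fun m : ℕ => |(x * t) ^ m / (m ! : ℝ) * (a m / (m ! : ℝ))|)
    (hb : Summable fun m : ℕ => |(y * t) ^ m / (m ! : ℝ) * (b m / (m ! : ℝ))|) :
    ∑' m : ℕ, t ^ m / (m ! : ℝ) * ((∑ n ∈ range (m + 1), (m.choose n : ℝ) ^ 2 *
        ((x ^ n * a n) * (y ^ (m - n) * b (m - n)))) / (m ! : ℝ))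
      = (∑' m : ℕ, (x * t) ^ m / (m ! : ℝ) * (a m / (m ! : ℝ))) *
        ∑' m : ℕ, (y * t) ^ m / (m ! : ℝ) * (b m / (m ! : ℝ)) := by
  simp_rw [← Real.norm_eq_abs] at ha hb
  rw [tsum_mul_tsum_eq_tsum_sum_range_of_summable_norm ha hb]
  refine tsum_congr fun m => ?_
  rw [sum_div, mul_sum]
  refine sum_congr rfl fun n hn => ?_
  obtain ⟨d, rfl⟩ := Nat.exists_eq_add_of_le (Nat.lt_succ_iff.mp (mem_range.mp hn))
  rw [Nat.add_sub_cancel_left, Nat.cast_add_choose]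
  field_simp
  ring

theorem egf_beamsplitter_general {Ω : Type*} [MeasurableSpace Ω] (μ : Measure Ω)
    (X Y : Ω → ℂ)
    (hX : Measurable X) (hY : Measurable Y)
    (hXY : ProbabilityTheory.IndepFun X Y μ)
    (hXc : CircSymm μ X)
    (hXm : ∀ k : ℕ, Integrable (fun ω => ‖X ω‖ ^ k) μ)
    (hYm : ∀ k : ℕ, Integrable (fun ω => ‖Y ω‖ ^ k) μ)
    (η : ℝ) (hη0 : 0 ≤ η) (hη1 : η ≤ 1) (t : ℝ)
    (hXs : Summable fun m : ℕ => |(η * t) ^ m / (Nat.factorial m : ℝ) *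
      ((∫ ω, ‖X ω‖ ^ (2 * m) ∂μ) / (Nat.factorial m : ℝ))|)
    (hYs : Summable fun m : ℕ => |((1 - η) * t) ^ m / (Nat.factorial m : ℝ) *
      ((∫ ω, ‖Y ω‖ ^ (2 * m) ∂μ) / (Nat.factorial m : ℝ))|) :
    egfMoments μ (fun ω => (Real.sqrt η : ℂ) * X ω + (Real.sqrt (1 - η) : ℂ) * Y ω) t
      = egfMoments μ X (η * t) * egfMoments μ Y ((1 - η) * t) := by
  have hsq : ∀ {s : ℝ}, 0 ≤ s → ‖(Real.sqrt s : ℂ)‖ ^ 2 = s := fun hs => by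
    rw [Complex.norm_real, Real.norm_of_nonneg (Real.sqrt_nonneg _), Real.sq_sqrt hs]
  have hmoments : ∀ m : ℕ,
      ∫ ω, ‖(Real.sqrt η : ℂ) * X ω + (Real.sqrt (1 - η) : ℂ) * Y ω‖ ^ (2 * m) ∂μ
        = ∑ n ∈ range (m + 1), (m.choose n : ℝ) ^ 2 *
            ((η ^ n * ∫ ω, ‖X ω‖ ^ (2 * n) ∂μ) *
              ((1 - η) ^ (m - n) * ∫ ω, ‖Y ω‖ ^ (2 * (m - n)) ∂μ)) := fun m => by
    rw [integral_norm_add_pow_two_mul (hX.const_mul _) (hY.const_mul _)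
      (hXY.comp (measurable_const_mul _) (measurable_const_mul _)) (hXc.const_mul hX _)
      (fun k => integrable_norm_const_mul_pow _ (hXm k))
      (fun k => integrable_norm_const_mul_pow _ (hYm k))]
    simp only [integral_norm_const_mul_pow]
    simp only [pow_mul, hsq hη0, hsq (sub_nonneg.2 hη1)]
  unfold egfMoments
  simp_rw [hmoments]
  exact tsum_binomial_sq_convolution _ _ η (1 - η) t hXs hYs

theorem egf_beamsplitter {Ω : Type*} [MeasurableSpace Ω] (μ : Measure Ω)
    [IsProbabilityMeasure μ] (X Y : Ω → ℂ)
    (hX : Measurable X) (hY : Measurable Y)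
    (hXY : ProbabilityTheory.IndepFun X Y μ)
    (hXc : CircSymm μ X) (hYc : CircSymm μ Y)
    (hXm : ∀ k : ℕ, Integrable (fun ω => ‖X ω‖ ^ k) μ)
    (hYm : ∀ k : ℕ, Integrable (fun ω => ‖Y ω‖ ^ k) μ)
    (η : ℝ) (hη0 : 0 ≤ η) (hη1 : η ≤ 1) (t : ℝ)
    (hXs : Summable fun m : ℕ => |(η * t) ^ m / (Nat.factorial m : ℝ) *
      ((∫ ω, ‖X ω‖ ^ (2 * m) ∂μ) / (Nat.factorial m : ℝ))|)
    (hYs : Summable fun m : ℕ => |((1 - η) * t) ^ m / (Nat.factorial m : ℝ) *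
      ((∫ ω, ‖Y ω‖ ^ (2 * m) ∂μ) / (Nat.factorial m : ℝ))|) :
    egfMoments μ (fun ω => (Real.sqrt η : ℂ) * X ω + (Real.sqrt (1 - η) : ℂ) * Y ω) t
      = egfMoments μ X (η * t) * egfMoments μ Y ((1 - η) * t) :=
  egf_beamsplitter_general μ X Y hX hY hXY hXc hXm hYm η hη0 hη1 t hXs hYs
end

section
/- For independent circularly symmetric complex random variables U, V with finite even moments: E|U+V|^{2m} = Σ_{n=0}^m binom(m,n)²·E|U|^{2n}·E|V|^{2(m-n)}. -/
/-! Expand `|U + V|^(2m) = (U + V)^m (Ū + V̄)^m` by the binomial theorem twice: the terms are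
`C(m,a) C(m,b) U^a Ū^b V^(m-a) V̄^(m-b)`. By independence each expectation factors, and circular
symmetry of `U` forces `E[U^a Ū^b] = 0` for `a ≠ b`. On the surviving diagonal `a = b` the factors
are `E|U|^(2a)` and `E|V|^(2(m-a))`. -/

open MeasureTheory

open ProbabilityTheory Complex ComplexConjugate Finset

def conjMonomial (a b : ℕ) (z : ℂ) : ℂ := z ^ a * conj z ^ b

lemma conjMonomial_self (n : ℕ) (z : ℂ) : conjMonomial n n z = ((‖z‖ ^ (2 * n) : ℝ) : ℂ) := by
  rw [conjMonomial, ← mul_pow, mul_conj', pow_mul]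
  push_cast
  rfl

lemma norm_conjMonomial (a b : ℕ) (z : ℂ) : ‖conjMonomial a b z‖ = ‖z‖ ^ (a + b) := by
  simp [conjMonomial, pow_add]

lemma continuous_conjMonomial (a b : ℕ) : Continuous (conjMonomial a b) := by
  unfold conjMonomial
  fun_prop

lemma conjMonomial_exp_mul (a b : ℕ) (θ : ℝ) (z : ℂ) :
    conjMonomial a b (exp (θ * I) * z) =
      exp ((((a : ℝ) - b) * θ : ℝ) * I) * conjMonomial a b z := by
  have hconj : conj (exp (θ * I)) = exp (-(θ * I)) := by
    rw [← exp_conj, map_mul, conj_ofReal, conj_I, mul_neg]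
  simp only [conjMonomial, map_mul, hconj, mul_pow, ← exp_nat_mul]
  rw [show ((((a : ℝ) - b) * θ : ℝ) : ℂ) * I = a * (θ * I) + b * -(θ * I) by push_cast; ring,
    exp_add]
  ring

lemma conjMonomial_add_self (m : ℕ) (x y : ℂ) :
    conjMonomial m m (x + y) = ∑ a ∈ range (m + 1), ∑ b ∈ range (m + 1),
      (m.choose a * m.choose b : ℂ) * (conjMonomial a b x * conjMonomial (m - a) (m - b) y) := by
  rw [conjMonomial, map_add, add_pow, add_pow, sum_mul_sum]
  refine sum_congr rfl fun a _ => sum_congr rfl fun b _ => ?_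
  simp only [conjMonomial]
  ring

section Integrals

variable {Ω : Type*} [MeasurableSpace Ω] {μ : Measure Ω} {U V : Ω → ℂ}

lemma CircSymm.integral_comp_exp_mul {E : Type*} [NormedAddCommGroup E] [NormedSpace ℝ E]
    (hUc : CircSymm μ U) (hU : AEMeasurable U μ) {f : ℂ → E} (hf : StronglyMeasurable f)
    (θ : ℝ) : ∫ ω, f (exp (θ * I) * U ω) ∂μ = ∫ ω, f (U ω) ∂μ := by
  rw [← integral_map (hU.const_mul _) hf.aestronglyMeasurable,
    ← integral_map hU hf.aestronglyMeasurable, hUc θ]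

-- Rotating by `θ = π / (a - b)` multiplies the integral by `-1`.
lemma CircSymm.integral_conjMonomial_eq_zero (hUc : CircSymm μ U) (hU : AEMeasurable U μ)
    {a b : ℕ} (hab : a ≠ b) : ∫ ω, conjMonomial a b (U ω) ∂μ = 0 := by
  have hd : (a : ℝ) - b ≠ 0 := sub_ne_zero.2 (by exact_mod_cast hab)
  have h := hUc.integral_comp_exp_mul hU (continuous_conjMonomial a b).stronglyMeasurable
    (Real.pi / ((a : ℝ) - b))
  simp_rw [conjMonomial_exp_mul, mul_div_cancel₀ _ hd, exp_pi_mul_I, neg_one_mul,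
    integral_neg] at h
  exact neg_eq_self.1 h

lemma integrable_conjMonomial_comp (hU : AEMeasurable U μ) {a b : ℕ}
    (h : Integrable (fun ω => ‖U ω‖ ^ (a + b)) μ) :
    Integrable (fun ω => conjMonomial a b (U ω)) μ :=
  (integrable_norm_iff ((continuous_conjMonomial a b).comp_aestronglyMeasurable
    hU.aestronglyMeasurable)).1 (by simpa only [norm_conjMonomial] using h)

theorem integral_conjMonomial_add_self (hU : AEMeasurable U μ) (hV : AEMeasurable V μ)
    (hUV : U ⟂ᵢ[μ] V) (hUc : CircSymm μ U) (m : ℕ)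
    (hUm : ∀ k ≤ 2 * m, Integrable (fun ω => ‖U ω‖ ^ k) μ)
    (hVm : ∀ k ≤ 2 * m, Integrable (fun ω => ‖V ω‖ ^ k) μ) :
    ∫ ω, conjMonomial m m (U ω + V ω) ∂μ = ∑ n ∈ range (m + 1), (m.choose n : ℂ) ^ 2 *
      (∫ ω, conjMonomial n n (U ω) ∂μ) * ∫ ω, conjMonomial (m - n) (m - n) (V ω) ∂μ := by
  have hterm : ∀ a ∈ range (m + 1), ∀ b ∈ range (m + 1),
      Integrable (fun ω => conjMonomial a b (U ω) * conjMonomial (m - a) (m - b) (V ω)) μ ∧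
      ∫ ω, conjMonomial a b (U ω) * conjMonomial (m - a) (m - b) (V ω) ∂μ =
        (∫ ω, conjMonomial a b (U ω) ∂μ) * ∫ ω, conjMonomial (m - a) (m - b) (V ω) ∂μ := by
    intro a ha b hb
    have hf := continuous_conjMonomial a b
    have hg := continuous_conjMonomial (m - a) (m - b)
    simp only [mem_range] at ha hb
    refine ⟨(hUV.comp hf.measurable hg.measurable).integrable_mul
      (integrable_conjMonomial_comp hU (hUm _ (by omega)))
      (integrable_conjMonomial_comp hV (hVm _ (by omega))),
      hUV.integral_fun_comp_mul_comp hU hV hf.aestronglyMeasurable hg.aestronglyMeasurable⟩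
  simp_rw [conjMonomial_add_self]
  rw [integral_finsetSum _ fun a ha =>
    integrable_finsetSum _ fun b hb => (hterm a ha b hb).1.const_mul _]
  refine sum_congr rfl fun a ha => ?_
  rw [integral_finsetSum _ fun b hb => (hterm a ha b hb).1.const_mul _,
    sum_eq_single_of_mem a ha fun b _ hba => ?_, integral_const_mul, (hterm a ha a ha).2]
  · ring
  · rw [integral_const_mul, (hterm a ha b ‹_›).2, hUc.integral_conjMonomial_eq_zero hU hba.symm]
    ring

end Integrals

theorem moment_convolution_general {Ω : Type*} [MeasurableSpace Ω] (μ : Measure Ω)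
    (U V : Ω → ℂ)
    (hU : Measurable U) (hV : Measurable V)
    (hUV : ProbabilityTheory.IndepFun U V μ)
    (hUc : CircSymm μ U) (m : ℕ)
    (hUm : ∀ k ≤ 2 * m, Integrable (fun ω => ‖U ω‖ ^ k) μ)
    (hVm : ∀ k ≤ 2 * m, Integrable (fun ω => ‖V ω‖ ^ k) μ) :
    (∫ ω, ‖U ω + V ω‖ ^ (2 * m) ∂μ)
      = ∑ n ∈ Finset.range (m + 1), (m.choose n : ℝ) ^ 2 *
          (∫ ω, ‖U ω‖ ^ (2 * n) ∂μ) *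
          (∫ ω, ‖V ω‖ ^ (2 * (m - n)) ∂μ) := by
  have key := integral_conjMonomial_add_self hU.aemeasurable hV.aemeasurable hUV hUc m hUm hVm
  simp_rw [conjMonomial_self, integral_complex_ofReal] at key
  exact_mod_cast key

theorem moment_convolution {Ω : Type*} [MeasurableSpace Ω] (μ : Measure Ω)
    [IsProbabilityMeasure μ] (U V : Ω → ℂ)
    (hU : Measurable U) (hV : Measurable V)
    (hUV : ProbabilityTheory.IndepFun U V μ)
    (hUc : CircSymm μ U) (hVc : CircSymm μ V) (m : ℕ)
    (hUm : ∀ k ≤ 2 * m, Integrable (fun ω => ‖U ω‖ ^ k) μ)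
    (hVm : ∀ k ≤ 2 * m, Integrable (fun ω => ‖V ω‖ ^ k) μ) :
    (∫ ω, ‖U ω + V ω‖ ^ (2 * m) ∂μ)
      = ∑ n ∈ Finset.range (m + 1), (m.choose n : ℝ) ^ 2 *
          (∫ ω, ‖U ω‖ ^ (2 * n) ∂μ) *
          (∫ ω, ‖V ω‖ ^ (2 * (m - n)) ∂μ) :=
  moment_convolution_general μ U V hU hV hUV hUc m hUm hVm
end

section
/- Laguerre polynomials satisfy the three-term recurrence −z·L_n(z) = (n+1)·L_{n+1}(z) − (2n+1)·L_n(z) + n·L_{n-1}(z) for n ≥ 1. -/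
lemma laguerre_key_nat (m k : ℕ) :
    (m+2) * ((m+2).choose k) + (m+1) * (m.choose k)
      = (2*m+3) * ((m+1).choose k) + k * ((m+1).choose (k-1)) := by
  cases k with
  | zero => simp; ring
  | succ j =>
    have h1 : (m+2).choose (j+1) = (m+1).choose j + (m+1).choose (j+1) :=
      Nat.choose_succ_succ _ _
    have h2 : (m+1).choose (j+1) = m.choose j + m.choose (j+1) :=
      Nat.choose_succ_succ _ _
    have h3 : m.choose j * (m+1) = (m+1).choose j * (m+1-j) := Nat.choose_mul_succ_eq m j
    rcases le_or_gt j (m+1) with hj | hj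
    · simp only [h1, h2, Nat.add_sub_cancel]
      zify [hj] at h3 ⊢
      linear_combination -h3
    · have e1 : (m+1).choose j = 0 := Nat.choose_eq_zero_of_lt hj
      have e2 : m.choose j = 0 := Nat.choose_eq_zero_of_lt (by omega)
      have e3 : m.choose (j+1) = 0 := Nat.choose_eq_zero_of_lt (by omega)
      simp [h1, h2, e1, e2, e3]

theorem laguerre_three_term (n : ℕ) (hn : 1 ≤ n) (x : ℝ) :
    ((n : ℝ) + 1) * laguerre (n + 1) x
      = (2 * (n : ℝ) + 1 - x) * laguerre n x - (n : ℝ) * laguerre (n - 1) x := by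
  obtain ⟨m, rfl⟩ : ∃ m, n = m + 1 := ⟨n - 1, (Nat.succ_pred_eq_of_pos hn).symm⟩
  simp only [laguerre, Nat.add_sub_cancel]
  have pad1 : ∑ k ∈ Finset.range (m+1+1+1), ((m+1).choose k : ℝ) * (-x) ^ k / (Nat.factorial k : ℝ)
      = ∑ k ∈ Finset.range (m+1+1), ((m+1).choose k : ℝ) * (-x) ^ k / (Nat.factorial k : ℝ) := by
    rw [Finset.sum_range_succ]
    have : (m+1).choose (m+2) = 0 := Nat.choose_eq_zero_of_lt (by omega)
    simp [this]
  have pad2 : ∑ k ∈ Finset.range (m+1+1+1), (m.choose k : ℝ) * (-x) ^ k / (Nat.factorial k : ℝ)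
      = ∑ k ∈ Finset.range (m+1), (m.choose k : ℝ) * (-x) ^ k / (Nat.factorial k : ℝ) := by
    rw [Finset.sum_range_succ, Finset.sum_range_succ]
    have h1 : m.choose (m+2) = 0 := Nat.choose_eq_zero_of_lt (by omega)
    have h2 : m.choose (m+1) = 0 := Nat.choose_eq_zero_of_lt (by omega)
    simp [h1, h2]
  have hx : ∑ k ∈ Finset.range (m+1+1+1),
        (k : ℝ) * ((m+1).choose (k-1) : ℝ) * (-x) ^ k / (Nat.factorial k : ℝ)
      = -x * ∑ k ∈ Finset.range (m+1+1), ((m+1).choose k : ℝ) * (-x) ^ k / (Nat.factorial k : ℝ) := by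
    rw [Finset.sum_range_succ']
    simp only [Nat.add_sub_cancel, Nat.cast_zero, zero_mul, pow_zero, Nat.factorial_zero,
      Nat.cast_one, zero_div, add_zero]
    rw [Finset.mul_sum]
    refine Finset.sum_congr rfl fun k _ => ?_
    have hfac : ((k+1).factorial : ℝ) = ((k : ℝ) + 1) * (k.factorial : ℝ) := by
      rw [Nat.factorial_succ]; push_cast; ring
    have hk1 : ((k : ℝ) + 1) ≠ 0 := by positivity
    have hk2 : (k.factorial : ℝ) ≠ 0 := by positivity
    rw [hfac, pow_succ]
    push_cast
    field_simp
  rw [show (2 * ((m+1 : ℕ) : ℝ) + 1 - x) = (2 * (m : ℝ) + 3) + (-x) by push_cast; ring,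
    add_mul (2 * (m : ℝ) + 3) (-x), ← hx, ← pad1, ← pad2, Finset.mul_sum, Finset.mul_sum, Finset.mul_sum,
    ← Finset.sum_add_distrib, ← Finset.sum_sub_distrib]
  refine Finset.sum_congr rfl fun k _ => ?_
  have hk' : ((m : ℝ) + 2) * ((m+2).choose k : ℝ) + ((m : ℝ) + 1) * (m.choose k : ℝ)
      = (2 * (m : ℝ) + 3) * ((m+1).choose k : ℝ) + (k : ℝ) * ((m+1).choose (k-1) : ℝ) := by
    exact_mod_cast laguerre_key_nat m k
  push_cast
  linear_combination ((-x) ^ k / (k.factorial : ℝ)) * hk'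
end
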